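/- Let H be a real inner product space, m ∈ H, and let (m_k)_{k≥0} be a sequence in H with m_0 = 0; set α_k = 1 − 2/(k+2) for k ≥ 1. Let ((β_ι), (v_ι), B) be an ℓ¹-representation of h ∈ H by unit vectors with B > 0. Assume: (i) ‖m‖² ≤ ‖m − h‖² + 4B², and (ii) for every k ≥ 1 and every ι ∈ ℕ, ‖m − m_k‖ ≤ ‖m − α_k·m_{k-1} − ((1 − α_k)·B)·v_ι‖. Then for every k ≥ 0, ‖m − m_k‖² ≤ ‖m − h‖² + 4B² / (k + 1). -/

import Mathlib

/-!
Since `h / B` is a convex combination of the unit vectors `v ι`, for every `x` some `v ι`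
satisfies `⟪x, h⟫ ≤ B ⟪x, v ι⟫`. Using that `v ι` as competitor at step `k`, with
`a = 2 / (k + 2)`, expanding the square and convexity of `‖·‖²` give
`‖m - m_k‖² ≤ (1 - a) ‖m - m_{k-1}‖² + a ‖m - h‖² + a² B²`.
The bound `4B² / k` for step `k - 1` then propagates because
`(1 - a) · 4 / k + a² = 4 (k + 3) / (k + 2)² ≤ 4 / (k + 1)`.
-/

open scoped RealInnerProductSpace

section

variable {H : Type*} [NormedAddCommGroup H] [InnerProductSpace ℝ H]

theorem exists_inner_le_mul_inner_of_hasSum {ι : Type*} {β : ι → ℝ} {v : ι → H} {B : ℝ} {h : H}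
    (hβ : ∀ i, 0 ≤ β i) (hB : HasSum β B) (hh : HasSum (fun i => β i • v i) h) (hBpos : 0 < B)
    (x : H) : ∃ i, ⟪x, h⟫ ≤ B * ⟪x, v i⟫ := by
  by_contra! hlt
  obtain ⟨i₀, hi₀⟩ : ∃ i, 0 < β i := by
    by_contra! hβ0
    have : β = 0 := funext fun i => le_antisymm (hβ0 i) (hβ i)
    exact hBpos.ne' ((this ▸ hB).unique hasSum_zero)
  have hinner : HasSum (fun i => β i * (B * ⟪x, v i⟫)) (B * ⟪x, h⟫) := by
    simpa [inner_smul_right, mul_left_comm] using (hh.mapL (innerSL ℝ x)).mul_left B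
  exact (hasSum_lt (fun i => mul_le_mul_of_nonneg_left (hlt i).le (hβ i))
    (mul_lt_mul_of_pos_left (hlt i₀) hi₀) hinner (hB.mul_right _)).false

theorem norm_sq_one_sub_smul_add_smul_le {a : ℝ} (ha₀ : 0 ≤ a) (ha₁ : a ≤ 1) (x y : H) :
    ‖(1 - a) • x + a • y‖ ^ 2 ≤ (1 - a) * ‖x‖ ^ 2 + a * ‖y‖ ^ 2 := by
  simpa using (convexOn_univ_norm.pow (fun _ _ => norm_nonneg _) 2).2 trivial trivial
    (sub_nonneg.2 ha₁) ha₀ (sub_add_cancel 1 a) (x := x) (y := y)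

theorem exists_relaxed_step_norm_sq_le {ι : Type*} {β : ι → ℝ} {v : ι → H} {B : ℝ} {h : H}
    (hβ : ∀ i, 0 ≤ β i) (hB : HasSum β B) (hv : ∀ i, ‖v i‖ = 1)
    (hh : HasSum (fun i => β i • v i) h) (hBpos : 0 < B)
    {a : ℝ} (ha₀ : 0 ≤ a) (ha₁ : a ≤ 1) (m y : H) :
    ∃ i, ‖m - (1 - a) • y - (a * B) • v i‖ ^ 2 ≤
      (1 - a) * ‖m - y‖ ^ 2 + a * ‖m - h‖ ^ 2 + (a * B) ^ 2 := by
  set x := m - (1 - a) • y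
  obtain ⟨i, hi⟩ := exists_inner_le_mul_inner_of_hasSum hβ hB hh hBpos x
  refine ⟨i, ?_⟩
  have hx : x - a • h = (1 - a) • (m - y) + a • (m - h) := by simp only [x]; module
  calc ‖x - (a * B) • v i‖ ^ 2 = ‖x‖ ^ 2 - 2 * a * (B * ⟪x, v i⟫) + (a * B) ^ 2 := by
        rw [norm_sub_sq_real, real_inner_smul_right, norm_smul, hv, Real.norm_eq_abs,
          mul_one, sq_abs]
        ring
    _ ≤ ‖x‖ ^ 2 - 2 * a * ⟪x, h⟫ + (a * B) ^ 2 := by gcongr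
    _ ≤ ‖x - a • h‖ ^ 2 + (a * B) ^ 2 := by
        rw [norm_sub_sq_real x, real_inner_smul_right]
        linarith [sq_nonneg ‖a • h‖]
    _ ≤ (1 - a) * ‖m - y‖ ^ 2 + a * ‖m - h‖ ^ 2 + (a * B) ^ 2 := by
        rw [hx]; gcongr; exact norm_sq_one_sub_smul_add_smul_le ha₀ ha₁ _ _

end

theorem relaxed_rate_recursion_le {t : ℝ} (ht : 0 < t) (B : ℝ) :
    (1 - 2 / (t + 2)) * (4 * B ^ 2 / t) + (2 / (t + 2) * B) ^ 2 ≤ 4 * B ^ 2 / (t + 1) := by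
  have key : 4 * B ^ 2 / (t + 1) - ((1 - 2 / (t + 2)) * (4 * B ^ 2 / t) + (2 / (t + 2) * B) ^ 2)
      = 4 * B ^ 2 / ((t + 1) * (t + 2) ^ 2) := by
    field_simp
    ring
  have : 0 ≤ 4 * B ^ 2 / ((t + 1) * (t + 2) ^ 2) := by positivity
  linarith

/-- Deterministic core of the relaxed-greedy part of Theorem 2 (rPPR.rga with
relaxing coefficients `α_k = 1 - 2/(k+2)`): if `m_0 = 0`, `‖m‖² ≤ ‖m-h‖² + 4B²`,
and each iterate is at least as close to `m` as every competitor
`α_k m_{k-1} + (1-α_k)B v_ι`, then `‖m - m_k‖² ≤ ‖m-h‖² + 4B²/(k+1)` for all `k`. -/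
theorem stmt7 {H : Type*} [NormedAddCommGroup H] [InnerProductSpace ℝ H]
    (m : H) (M : ℕ → H) (hM0 : M 0 = 0)
    (h : H) (β : ℕ → ℝ) (v : ℕ → H) (B : ℝ)
    (hβ : ∀ ι, 0 ≤ β ι) (hBsum : HasSum β B) (hv : ∀ ι, ‖v ι‖ = 1)
    (hrep : HasSum (fun ι => β ι • v ι) h) (hBpos : 0 < B)
    (hbase : ‖m‖ ^ 2 ≤ ‖m - h‖ ^ 2 + 4 * B ^ 2)
    (hstep : ∀ k : ℕ, 1 ≤ k → ∀ ι : ℕ,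
      ‖m - M k‖ ≤
        ‖m - (1 - 2 / ((k : ℝ) + 2)) • M (k - 1)
            - ((1 - (1 - 2 / ((k : ℝ) + 2))) * B) • v ι‖) :
    ∀ k : ℕ, ‖m - M k‖ ^ 2 ≤ ‖m - h‖ ^ 2 + 4 * B ^ 2 / ((k : ℝ) + 1) := by
  intro k
  induction k with
  | zero => simpa [hM0] using hbase
  | succ k ih =>
    set t : ℝ := ((k + 1 : ℕ) : ℝ)
    have ht : 0 < t := by positivity
    set a := 2 / (t + 2)
    have ha₀ : 0 ≤ a := by positivity
    have ha₁ : a ≤ 1 := (div_le_one (by positivity)).2 (by linarith)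
    obtain ⟨ι, hι⟩ := exists_relaxed_step_norm_sq_le hβ hBsum hv hrep hBpos ha₀ ha₁ m (M k)
    have hcomp := hstep (k + 1) (by omega) ι
    rw [sub_sub_cancel, Nat.add_sub_cancel] at hcomp
    rw [← Nat.cast_succ] at ih
    calc ‖m - M (k + 1)‖ ^ 2 ≤ ‖m - (1 - a) • M k - (a * B) • v ι‖ ^ 2 := by gcongr
      _ ≤ (1 - a) * (‖m - h‖ ^ 2 + 4 * B ^ 2 / t) + a * ‖m - h‖ ^ 2 + (a * B) ^ 2 := by
        grw [← ih] <;> linarith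
      _ = ‖m - h‖ ^ 2 + ((1 - a) * (4 * B ^ 2 / t) + (a * B) ^ 2) := by ring
      _ ≤ ‖m - h‖ ^ 2 + 4 * B ^ 2 / (t + 1) := by grw [relaxed_rate_recursion_le ht]
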